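/- arXiv:2403.14644 — 2 statements merged into one kernel-verified Lean document; each statement's English description precedes it below -/
import Mathlib

section
/- For every natural number p and every real number z with 0 ≤ z ≤ 2π, the log–sine integral ∫₀ᶻ x^(2p) · log(2·sin(x/2)) dx equals −(2p)! · ∑_{i=0}^{2p} ((−1)^(i+⌊(i+1)/2⌋) / (2p−i)!) · Cl_{i+2}(z) · z^(2p−i). -/
open Real MeasureTheory Finset

/-- The Clausen function `Cl n θ`: for even `n` it is `∑ sin (k θ) / k ^ n`,
for odd `n` it is `∑ cos (k θ) / k ^ n`. -/
noncomputable def Cl (n : ℕ) (θ : ℝ) : ℝ :=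
  if Even n then ∑' k : ℕ+, Real.sin (k * θ) / (k : ℝ) ^ n
  else ∑' k : ℕ+, Real.cos (k * θ) / (k : ℝ) ^ n

/-!
For `0 ≤ r < 1`, taking real parts in `-log (1 - r e^{ix}) = ∑ r^k e^{ikx} / k` gives
`-½ log (1 - 2 r cos x + r²) = ∑ r^k cos (k x) / k`, uniformly in `x`; integrating termwise over
`[0, z]` and letting `r → 1⁻` (Abel's theorem on the series side, dominated convergence with the
majorant `|log (2 sin (x/2))|` on the integral side) yields `Cl₂ z = -∫₀^z log (2 sin (x/2))`.
Hence `Cl₂' = -log (2 sin (x/2))` on `(0, 2π)`, while termwise differentiation gives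
`Cl_{n+1}' = ± Cl_n` for `n ≥ 2`. Integrating `x^{2p}` by parts repeatedly against this tower of
antiderivatives produces the formula; the boundary term at `0` is a multiple of `Cl_{2p+2} 0 = 0`.
-/

open Filter Topology
open scoped Nat Interval

lemma summable_one_div_pnat_pow {n : ℕ} (hn : 2 ≤ n) :
    Summable fun k : ℕ+ => 1 / (k : ℝ) ^ n :=
  (Real.summable_one_div_nat_pow.2 hn).comp_injective PNat.coe_injective

section BoundedFourierSeries

variable {f f' : ℝ → ℝ} {n : ℕ}

lemma norm_div_pow_le_one_div_pow {t : ℝ} (ht : |t| ≤ 1) (k : ℕ) :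
    ‖t / (k : ℝ) ^ n‖ ≤ 1 / (k : ℝ) ^ n := by
  rw [norm_div, norm_pow, Real.norm_natCast]
  exact div_le_div_of_nonneg_right ht (by positivity)

lemma continuous_tsum_comp_mul_div_pow (hf : Continuous f) (hf_le : ∀ y, |f y| ≤ 1)
    (hn : 2 ≤ n) : Continuous fun θ => ∑' k : ℕ+, f (k * θ) / (k : ℝ) ^ n :=
  continuous_tsum (fun k => by fun_prop) (summable_one_div_pnat_pow hn)
    fun k θ => norm_div_pow_le_one_div_pow (hf_le _) k

lemma hasDerivAt_tsum_comp_mul_div_pow (hf : ∀ y, HasDerivAt f (f' y) y)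
    (hf_le : ∀ y, |f y| ≤ 1) (hf'_le : ∀ y, |f' y| ≤ 1) (hn : 2 ≤ n) (x : ℝ) :
    HasDerivAt (fun θ => ∑' k : ℕ+, f (k * θ) / (k : ℝ) ^ (n + 1))
      (∑' k : ℕ+, f' (k * x) / (k : ℝ) ^ n) x := by
  refine hasDerivAt_tsum (summable_one_div_pnat_pow hn) (fun k y => ?_)
    (fun k y => norm_div_pow_le_one_div_pow (hf'_le _) k) (y₀ := x)
    ((summable_one_div_pnat_pow (by omega : 2 ≤ n + 1)).of_norm_bounded
      fun k => norm_div_pow_le_one_div_pow (hf_le _) k) x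
  have hk : (k : ℝ) ≠ 0 := Nat.cast_ne_zero.2 k.ne_zero
  refine ((hf (k * y)).comp y ((hasDerivAt_id y).const_mul (k : ℝ))).div_const _ |>.congr_deriv ?_
  field_simp
  ring

end BoundedFourierSeries

lemma Cl_of_even {n : ℕ} (hn : Even n) : Cl n = fun θ => ∑' k : ℕ+, sin (k * θ) / (k : ℝ) ^ n := by
  ext θ
  simp [Cl, hn]

lemma Cl_of_odd {n : ℕ} (hn : Odd n) : Cl n = fun θ => ∑' k : ℕ+, cos (k * θ) / (k : ℝ) ^ n := by
  ext θ
  simp [Cl, Nat.not_even_iff_odd.2 hn]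

lemma Cl_zero_of_even {n : ℕ} (hn : Even n) : Cl n 0 = 0 := by
  simp [Cl_of_even hn]

lemma continuous_Cl {n : ℕ} (hn : 2 ≤ n) : Continuous (Cl n) := by
  rcases Nat.even_or_odd n with hn' | hn'
  · exact Cl_of_even hn' ▸ continuous_tsum_comp_mul_div_pow continuous_sin abs_sin_le_one hn
  · exact Cl_of_odd hn' ▸ continuous_tsum_comp_mul_div_pow continuous_cos abs_cos_le_one hn

lemma hasDerivAt_Cl_succ {n : ℕ} (hn : 2 ≤ n) (x : ℝ) :
    HasDerivAt (Cl (n + 1)) ((-1) ^ (n + 1) * Cl n x) x := by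
  rcases Nat.even_or_odd n with hn' | hn'
  · have h := hasDerivAt_tsum_comp_mul_div_pow (fun y => hasDerivAt_cos y)
      abs_cos_le_one (fun y => by rw [abs_neg]; exact abs_sin_le_one y) hn x
    rw [Cl_of_odd hn'.add_one, Cl_of_even hn', hn'.add_one.neg_one_pow]
    simpa [neg_div, tsum_neg] using h
  · have h := hasDerivAt_tsum_comp_mul_div_pow (fun y => hasDerivAt_sin y)
      abs_sin_le_one abs_cos_le_one hn x
    rw [Cl_of_even hn'.add_one, Cl_of_odd hn', hn'.add_one.neg_one_pow]
    simpa using h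

lemma one_sub_two_mul_cos_add_sq (r x : ℝ) :
    1 - 2 * r * cos x + r ^ 2 = (1 - r) ^ 2 + r * (2 * sin (x / 2)) ^ 2 := by
  have h : cos x = 2 * cos (x / 2) ^ 2 - 1 := by rw [← cos_two_mul]; ring_nf
  rw [h, cos_sq']
  ring

-- Indexed by `ℕ`: the `k = 0` term is `r ^ 0 * cos 0 / 0 = 0`.
lemma hasSum_pow_mul_cos_div {r : ℝ} (hr : |r| < 1) (x : ℝ) :
    HasSum (fun k : ℕ => r ^ k * cos (k * x) / k) (-(1 / 2) * log (1 - 2 * r * cos x + r ^ 2)) := by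
  set w : ℂ := r * Complex.exp (x * Complex.I)
  have hw : ‖w‖ < 1 := by
    simpa [w, Complex.norm_exp_ofReal_mul_I] using hr
  have hre : ∀ k : ℕ, (w ^ k / k).re = r ^ k * cos (k * x) / k := by
    intro k
    rw [Complex.div_natCast_re, mul_pow, ← Complex.exp_nat_mul, ← Complex.ofReal_pow,
      show (k : ℂ) * (x * Complex.I) = ((k * x : ℝ) : ℂ) * Complex.I by push_cast; ring,
      Complex.re_ofReal_mul, Complex.exp_ofReal_mul_I_re]
  have hnorm : ‖1 - w‖ ^ 2 = 1 - 2 * r * cos x + r ^ 2 := by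
    rw [Complex.sq_norm, Complex.normSq_apply]
    simp [w, Complex.exp_ofReal_mul_I_re, Complex.exp_ofReal_mul_I_im]
    nlinarith [sin_sq_add_cos_sq x]
  have hlog : (-Complex.log (1 - w)).re = -(1 / 2) * log (1 - 2 * r * cos x + r ^ 2) := by
    rw [Complex.neg_re, Complex.log_re, ← hnorm, Real.log_pow]
    push_cast
    ring
  simpa only [hre, hlog] using Complex.hasSum_re (Complex.hasSum_taylorSeries_neg_log hw)

lemma integral_cos_mul_div (c z : ℝ) :
    ∫ x in (0 : ℝ)..z, cos (c * x) / c = sin (c * z) / c ^ 2 := by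
  rcases eq_or_ne c 0 with rfl | hc
  · simp
  rw [intervalIntegral.integral_div, intervalIntegral.integral_comp_mul_left (fun x => cos x) hc,
    integral_cos]
  simp [field]

lemma hasSum_pow_mul_sin_div_sq {r : ℝ} (hr : |r| < 1) (z : ℝ) :
    HasSum (fun k : ℕ => r ^ k * sin (k * z) / k ^ 2)
      (∫ x in (0 : ℝ)..z, -(1 / 2) * log (1 - 2 * r * cos x + r ^ 2)) := by
  have h := intervalIntegral.hasSum_integral_of_dominated_convergence
    (μ := volume) (a := 0) (b := z) (F := fun (k : ℕ) (x : ℝ) => r ^ k * cos (k * x) / k)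
    (fun k _ => |r| ^ k)
    (fun k => by fun_prop) (fun k => ?_)
    (.of_forall fun x _ => summable_geometric_of_lt_one (abs_nonneg r) hr) intervalIntegrable_const
    (.of_forall fun x _ => hasSum_pow_mul_cos_div hr x)
  · simpa only [mul_div_assoc, intervalIntegral.integral_const_mul, integral_cos_mul_div] using h
  · refine .of_forall fun x _ => ?_
    rw [norm_div, norm_mul, norm_pow, Real.norm_natCast, Real.norm_eq_abs]
    rcases eq_or_ne k 0 with rfl | hk
    · simp
    calc |r| ^ k * |cos (k * x)| / k ≤ |r| ^ k * 1 / 1 := by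
          gcongr
          · exact abs_cos_le_one _
          · exact_mod_cast Nat.one_le_iff_ne_zero.2 hk
      _ = |r| ^ k := by ring

lemma ae_sin_half_ne_zero : ∀ᵐ x : ℝ, sin (x / 2) ≠ 0 := by
  have hsub : {x : ℝ | sin (x / 2) = 0} ⊆ Set.range fun n : ℤ => 2 * (n * π) := by
    intro x hx
    obtain ⟨n, hn⟩ := sin_eq_zero_iff.1 hx
    exact ⟨n, by simp only; linarith⟩
  filter_upwards [((Set.countable_range _).mono hsub).ae_notMem volume] with x hx
  exact hx

lemma intervalIntegrable_log_two_mul_sin_half (a b : ℝ) :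
    IntervalIntegrable (fun x => log (2 * sin (x / 2))) volume a b :=
  MeromorphicOn.intervalIntegrable_log (f := fun x => 2 * sin (x / 2))
    (AnalyticOnNhd.meromorphicOn fun x _ => by fun_prop)

lemma abs_log_one_sub_two_mul_cos_add_sq_le {r x : ℝ} (hr : r ∈ Set.Icc (1 / 2) 1)
    (hx : sin (x / 2) ≠ 0) :
    |log (1 - 2 * r * cos x + r ^ 2)| ≤ 2 * (|log (2 * sin (x / 2))| + log 2) := by
  set s := 2 * sin (x / 2)
  have hs : 0 < s ^ 2 := by
    have : s ≠ 0 := mul_ne_zero two_ne_zero hx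
    positivity
  have hlower : s ^ 2 / 2 ≤ 1 - 2 * r * cos x + r ^ 2 := by
    rw [one_sub_two_mul_cos_add_sq]
    nlinarith [hr.1, sq_nonneg (1 - r), sq_nonneg s]
  have hupper : 1 - 2 * r * cos x + r ^ 2 ≤ 2 ^ 2 := by
    nlinarith [hr.1, hr.2, neg_one_le_cos x]
  have hlog_lower := log_le_log (half_pos hs) hlower
  have hlog_upper := log_le_log ((half_pos hs).trans_le hlower) hupper
  rw [log_div hs.ne' two_ne_zero, log_pow] at hlog_lower
  rw [log_pow] at hlog_upper
  push_cast at hlog_lower hlog_upper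
  have := log_nonneg one_le_two
  rw [abs_le]
  constructor <;> linarith [neg_abs_le (log s), abs_nonneg (log s)]

lemma tendsto_integral_log_one_sub_two_mul_cos_add_sq (z : ℝ) :
    Tendsto (fun r => ∫ x in (0 : ℝ)..z, -(1 / 2) * log (1 - 2 * r * cos x + r ^ 2)) (𝓝[<] 1)
      (𝓝 (∫ x in (0 : ℝ)..z, -log (2 * sin (x / 2)))) := by
  refine intervalIntegral.tendsto_integral_filter_of_dominated_convergence
    (fun x => |log (2 * sin (x / 2))| + log 2)
    (.of_forall fun r => ((measurable_log.comp (by fun_prop)).const_mul _).aestronglyMeasurable) ?_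
    ((intervalIntegrable_log_two_mul_sin_half 0 z).norm.add intervalIntegrable_const) ?_
  · filter_upwards [Ico_mem_nhdsLT (by norm_num : (1 / 2 : ℝ) < 1)] with r hr
    filter_upwards [ae_sin_half_ne_zero] with x hx _
    rw [norm_mul, norm_neg, Real.norm_eq_abs, Real.norm_eq_abs]
    have := abs_log_one_sub_two_mul_cos_add_sq_le (Set.Ico_subset_Icc_self hr) hx
    norm_num
    linarith
  · filter_upwards [ae_sin_half_ne_zero] with x hx _
    have hcont : ContinuousAt (fun r => -(1 / 2) * log (1 - 2 * r * cos x + r ^ 2)) 1 := by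
      refine continuousAt_const.mul (ContinuousAt.log (by fun_prop) ?_)
      rw [one_sub_two_mul_cos_add_sq]
      simpa using hx
    convert hcont.tendsto.mono_left nhdsWithin_le_nhds using 2
    rw [one_sub_two_mul_cos_add_sq, sub_self, zero_pow two_ne_zero, zero_add, one_mul, log_pow]
    push_cast
    ring

lemma hasSum_sin_div_sq (z : ℝ) : HasSum (fun k : ℕ => sin (k * z) / (k : ℝ) ^ 2) (Cl 2 z) := by
  have h : HasSum (fun k : ℕ+ => sin (k * z) / (k : ℝ) ^ 2) (Cl 2 z) := by
    rw [Cl_of_even even_two]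
    exact ((summable_one_div_pnat_pow le_rfl).of_norm_bounded
      fun k => norm_div_pow_le_one_div_pow (abs_sin_le_one _) k).hasSum
  simpa using hasSum_pnat_iff (f := fun k : ℕ => sin (k * z) / (k : ℝ) ^ 2) |>.1 h

theorem integral_log_two_mul_sin_half (z : ℝ) :
    ∫ x in (0 : ℝ)..z, log (2 * sin (x / 2)) = -Cl 2 z := by
  have habel : Tendsto (fun r => ∑' k : ℕ, sin (k * z) / (k : ℝ) ^ 2 * r ^ k) (𝓝[<] 1)
      (𝓝 (Cl 2 z)) :=
    Real.tendsto_tsum_powerSeries_nhdsWithin_lt (hasSum_sin_div_sq z).tendsto_sum_nat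
  have hseries : (fun r => ∫ x in (0 : ℝ)..z, -(1 / 2) * log (1 - 2 * r * cos x + r ^ 2))
      =ᶠ[𝓝[<] 1] fun r => ∑' k : ℕ, sin (k * z) / (k : ℝ) ^ 2 * r ^ k := by
    filter_upwards [Ioo_mem_nhdsLT (show (-1 : ℝ) < 1 by norm_num)] with r hr
    rw [← (hasSum_pow_mul_sin_div_sq (abs_lt.2 hr) z).tsum_eq]
    exact tsum_congr fun k => by ring
  have h := tendsto_nhds_unique
    ((tendsto_integral_log_one_sub_two_mul_cos_add_sq z).congr' hseries) habel
  rw [intervalIntegral.integral_neg] at h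
  linarith

lemma hasDerivAt_Cl_two {x : ℝ} (hx : sin (x / 2) ≠ 0) :
    HasDerivAt (Cl 2) (-log (2 * sin (x / 2))) x := by
  have hCl : Cl 2 = fun z => -∫ t in (0 : ℝ)..z, log (2 * sin (t / 2)) := by
    ext z
    rw [integral_log_two_mul_sin_half, neg_neg]
  have hcont : ContinuousAt (fun t => log (2 * sin (t / 2))) x :=
    ContinuousAt.log (by fun_prop) (mul_ne_zero two_ne_zero hx)
  rw [hCl]
  exact (intervalIntegral.integral_hasDerivAt_right (intervalIntegrable_log_two_mul_sin_half 0 x)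
    (measurable_log.comp (by fun_prop)).aestronglyMeasurable.stronglyMeasurableAtFilter
    hcont).neg

theorem integral_pow_mul_eq_sum_of_hasDerivAt {g : ℝ → ℝ} {F : ℕ → ℝ → ℝ} {z : ℝ}
    (hF : ∀ i, ContinuousOn (F i) [[0, z]])
    (hg : ∀ x ∈ Set.Ioo (min 0 z) (max 0 z), HasDerivAt (F 0) (g x) x)
    (hF' : ∀ i, ∀ x ∈ Set.Ioo (min 0 z) (max 0 z), HasDerivAt (F (i + 1)) (F i x) x)
    (hgi : IntervalIntegrable g volume 0 z) (m : ℕ) :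
    ∫ x in (0 : ℝ)..z, x ^ m * g x =
      ∑ i ∈ range (m + 1), (-1) ^ i * m.descFactorial i * z ^ (m - i) * F i z
        - (-1) ^ m * m ! * F m 0 := by
  induction m generalizing g F with
  | zero =>
    simpa using intervalIntegral.integral_eq_sub_of_hasDeriv_right (hF 0)
      (fun x hx => (hg x hx).hasDerivWithinAt) hgi
  | succ m ih =>
    have hparts := intervalIntegral.integral_mul_deriv_eq_deriv_mul_of_hasDerivAt
      (u := fun x => x ^ (m + 1)) (u' := fun x => (m + 1) * x ^ m) (by fun_prop) (hF 0)
      (fun x _ => by simpa using hasDerivAt_pow (m + 1) x) hg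
      (by apply Continuous.intervalIntegrable; fun_prop) hgi
    have hstep := ih (g := F 0) (F := fun i => F (i + 1)) (fun i => hF _) (hF' 0)
      (fun i => hF' (i + 1)) (hF 0).intervalIntegrable
    simp only [mul_assoc, intervalIntegral.integral_const_mul] at hparts
    have hterm : ∀ i ∈ range (m + 1), ((-1) ^ (i + 1) * (m + 1).descFactorial (i + 1) *
        z ^ (m + 1 - (i + 1)) * F (i + 1) z : ℝ) =
        -((m + 1) * ((-1) ^ i * m.descFactorial i * z ^ (m - i) * F (i + 1) z)) := by
      intro i _
      rw [Nat.succ_descFactorial_succ, Nat.add_sub_add_right]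
      push_cast
      ring
    rw [hparts, hstep, sum_range_succ' _ (m + 1), sum_congr rfl hterm, sum_neg_distrib, ← mul_sum]
    simp [Nat.factorial_succ]
    ring

lemma hasDerivAt_neg_one_pow_mul_Cl (i : ℕ) (x : ℝ) :
    HasDerivAt (fun x => -(-1) ^ ((i + 2) / 2) * Cl (i + 3) x)
      (-(-1) ^ ((i + 1) / 2) * Cl (i + 2) x) x := by
  refine ((hasDerivAt_Cl_succ (n := i + 2) (by omega) x).const_mul _).congr_deriv ?_
  have hsign : (-1 : ℝ) ^ ((i + 2) / 2) * (-1) ^ (i + 2 + 1) = (-1) ^ ((i + 1) / 2) := by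
    rw [← pow_add, neg_one_pow_eq_pow_mod_two, neg_one_pow_eq_pow_mod_two (n := (i + 1) / 2)]
    congr 1
    rcases Nat.even_or_odd' i with ⟨k, rfl | rfl⟩ <;> omega
  rw [← hsign]
  ring

lemma Nat.cast_descFactorial_eq_factorial_div {n i : ℕ} (hi : i ≤ n) :
    (n.descFactorial i : ℝ) = n.factorial / (n - i).factorial := by
  rw [eq_div_iff (by positivity), mul_comm]
  exact_mod_cast Nat.factorial_mul_descFactorial hi

theorem logsine_even_moment (p : ℕ) (z : ℝ) (hz0 : 0 ≤ z) (hz1 : z ≤ 2 * π) :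
    ∫ x in (0:ℝ)..z, x ^ (2 * p) * Real.log (2 * Real.sin (x / 2)) =
      -(2 * p).factorial *
        ∑ i ∈ Finset.range (2 * p + 1),
          (-1 : ℝ) ^ (i + (i + 1) / 2) / (2 * p - i).factorial *
            Cl (i + 2) z * z ^ (2 * p - i) := by
  have hIoo : Set.Ioo (min 0 z) (max 0 z) = Set.Ioo 0 z := by
    rw [min_eq_left hz0, max_eq_right hz0]
  have hlogsine : ∀ x ∈ Set.Ioo (min 0 z) (max 0 z),
      HasDerivAt (fun x => -(-1) ^ ((0 + 1) / 2) * Cl (0 + 2) x) (log (2 * sin (x / 2))) x := by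
    rw [hIoo]
    intro x hx
    have hsin : sin (x / 2) ≠ 0 := (sin_pos_of_pos_of_lt_pi (by linarith [hx.1])
      (by linarith [hx.2])).ne'
    simpa using (hasDerivAt_Cl_two hsin).const_mul (-1 : ℝ)
  rw [integral_pow_mul_eq_sum_of_hasDerivAt (F := fun i x => -(-1) ^ ((i + 1) / 2) * Cl (i + 2) x)
    (fun i => ((continuous_Cl (by omega)).const_mul _).continuousOn) hlogsine
    (fun i x _ => hasDerivAt_neg_one_pow_mul_Cl i x) (intervalIntegrable_log_two_mul_sin_half 0 z),
    Cl_zero_of_even ⟨p + 1, by ring⟩, mul_sum]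
  simp only [mul_zero, sub_zero]
  refine sum_congr rfl fun i hi => ?_
  rw [Nat.cast_descFactorial_eq_factorial_div (Nat.lt_succ_iff.1 (mem_range.1 hi)), pow_add]
  ring
end

section
/- For every natural number M and every real number x with 0 ≤ x ≤ π, the moment integral I(M, x) = ∫₀ˣ t^M · log|sin t| dt satisfies I(M, x) = ∑_{i=0}^{M} (−1)^(i+1) · (M! / (M−i)!) · x^(M−i) · Υ^{i+2}(x). -/
open Real MeasureTheory Finset

/-- The iterated log–sine integrals: `Υ 1 x = -log |sin x|` and
`Υ (n+1) x = ∫ t in 0..x, Υ n t` for `n ≥ 1`. -/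
noncomputable def Upsilon : ℕ → ℝ → ℝ
  | 0, _ => 0
  | 1, x => -Real.log |Real.sin x|
  | (n + 2), x => ∫ t in (0:ℝ)..x, Upsilon (n + 1) t

/-! Repeated integration by parts, done in one stroke: away from the zeros of `sin`, each
`Υ (k + 2)` is a primitive of `Υ (k + 1)`, so the derivative of
`∑ i ≤ M, (-1) ^ i * M.descFactorial i * x ^ (M - i) * Υ (n + i + 2) x` telescopes to
`x ^ M * Υ (n + 1) x`. The `Υ (k + 2)` are continuous and vanish at `0`, and the zeros of `sin`
form a countable set, which the fundamental theorem of calculus may ignore. -/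

section IteratedPrimitive

variable {𝕜 : Type*} [NontriviallyNormedField 𝕜]

theorem hasDerivAt_sum_neg_one_pow_mul_descFactorial {G : ℕ → 𝕜 → 𝕜} {y : 𝕜} (M : ℕ)
    (hG : ∀ i ≤ M, HasDerivAt (G (i + 1)) (G i y) y) :
    HasDerivAt
      (fun u => ∑ i ∈ range (M + 1), (-1) ^ i * M.descFactorial i * u ^ (M - i) * G (i + 1) u)
      (y ^ M * G 0 y) y := by
  set a : ℕ → 𝕜 := fun i => (-1) ^ i * M.descFactorial i * y ^ (M - i) * G i y
  have hterm : ∀ i ∈ range (M + 1), HasDerivAt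
      (fun u => (-1) ^ i * M.descFactorial i * u ^ (M - i) * G (i + 1) u) (a i - a (i + 1)) y := by
    intro i hi
    refine (((hasDerivAt_pow (M - i) y).const_mul ((-1) ^ i * M.descFactorial i : 𝕜)).fun_mul
      (hG i (mem_range_succ_iff.1 hi))).congr_deriv ?_
    simp only [a, Nat.descFactorial_succ, Nat.sub_sub, pow_succ]
    push_cast
    ring
  refine (HasDerivAt.fun_sum hterm).congr_deriv ?_
  rw [sum_range_sub']
  simp [a]

end IteratedPrimitive

theorem countable_setOf_sin_eq_zero : {y : ℝ | sin y = 0}.Countable :=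
  (Set.countable_range fun n : ℤ => (n : ℝ) * π).mono fun _ hy => sin_eq_zero_iff.1 hy

theorem Upsilon_one : Upsilon 1 = fun x => -log |sin x| := rfl

theorem intervalIntegrable_Upsilon : ∀ n (a b : ℝ), IntervalIntegrable (Upsilon n) volume a b
  | 0, _, _ => intervalIntegrable_const
  | 1, _, _ => by
    simp_rw [Upsilon_one, log_abs]
    exact intervalIntegrable_log_sin.neg
  | n + 2, a, b =>
    (intervalIntegral.continuous_primitive (intervalIntegrable_Upsilon (n + 1)) 0).intervalIntegrable
      a b

@[fun_prop]
theorem continuous_Upsilon_add_two (n : ℕ) : Continuous (Upsilon (n + 2)) :=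
  intervalIntegral.continuous_primitive (intervalIntegrable_Upsilon (n + 1)) 0

theorem Upsilon_add_two_zero (n : ℕ) : Upsilon (n + 2) 0 = 0 :=
  intervalIntegral.integral_same

theorem measurable_Upsilon : ∀ n, Measurable (Upsilon n)
  | 0 => measurable_const
  | 1 => by rw [Upsilon_one]; fun_prop
  | n + 2 => (continuous_Upsilon_add_two n).measurable

theorem continuousAt_Upsilon {y : ℝ} (hy : sin y ≠ 0) : ∀ n, ContinuousAt (Upsilon n) y
  | 0 => continuousAt_const
  | 1 => by rw [Upsilon_one]; exact (continuous_sin.abs.continuousAt.log (abs_ne_zero.2 hy)).neg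
  | n + 2 => (continuous_Upsilon_add_two n).continuousAt

theorem hasDerivAt_Upsilon_add_two (n : ℕ) {y : ℝ} (hy : sin y ≠ 0) :
    HasDerivAt (Upsilon (n + 2)) (Upsilon (n + 1) y) y :=
  intervalIntegral.integral_hasDerivAt_right (intervalIntegrable_Upsilon _ _ _)
    (measurable_Upsilon _).stronglyMeasurable.stronglyMeasurableAtFilter
    (continuousAt_Upsilon hy _)

theorem integral_pow_mul_Upsilon (M n : ℕ) (x : ℝ) :
    ∫ t in (0:ℝ)..x, t ^ M * Upsilon (n + 1) t =
      ∑ i ∈ range (M + 1), (-1) ^ i * M.descFactorial i * x ^ (M - i) * Upsilon (n + i + 2) x := by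
  rw [integral_eq_of_hasDerivAt_off_countable (fun u => ∑ i ∈ range (M + 1),
    (-1) ^ i * M.descFactorial i * u ^ (M - i) * Upsilon (n + i + 2) u) _ countable_setOf_sin_eq_zero]
  · simp [Upsilon_add_two_zero]
  · exact Continuous.continuousOn (by fun_prop)
  · intro y hy
    exact hasDerivAt_sum_neg_one_pow_mul_descFactorial (G := fun i => Upsilon (n + i + 1)) M
      fun i _ => hasDerivAt_Upsilon_add_two (n + i) hy.2
  · exact (intervalIntegrable_Upsilon _ _ _).continuousOn_mul (continuous_pow M).continuousOn

theorem logsine_moment_by_parts_general (M : ℕ) (x : ℝ) :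
    ∫ t in (0:ℝ)..x, t ^ M * Real.log |Real.sin t| =
      ∑ i ∈ Finset.range (M + 1),
        (-1 : ℝ) ^ (i + 1) * (M.factorial / (M - i).factorial) *
          x ^ (M - i) * Upsilon (i + 2) x := by
  have hcoef : ∀ i ∈ range (M + 1), (M.factorial / (M - i).factorial : ℝ) = M.descFactorial i := by
    intro i hi
    rw [← Nat.factorial_mul_descFactorial (mem_range_succ_iff.1 hi)]
    push_cast
    field_simp
  calc ∫ t in (0:ℝ)..x, t ^ M * Real.log |Real.sin t|
      = -∫ t in (0:ℝ)..x, t ^ M * Upsilon 1 t := by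
        simp [Upsilon_one, ← intervalIntegral.integral_neg]
    _ = _ := by
      rw [integral_pow_mul_Upsilon M 0, ← sum_neg_distrib]
      refine sum_congr rfl fun i hi => ?_
      rw [hcoef i hi, zero_add]
      ring

theorem logsine_moment_by_parts (M : ℕ) (x : ℝ) (hx0 : 0 ≤ x) (hx1 : x ≤ π) :
    ∫ t in (0:ℝ)..x, t ^ M * Real.log |Real.sin t| =
      ∑ i ∈ Finset.range (M + 1),
        (-1 : ℝ) ^ (i + 1) * (M.factorial / (M - i).factorial) *
          x ^ (M - i) * Upsilon (i + 2) x :=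
  logsine_moment_by_parts_general M x
end
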